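/- arXiv:1903.03537 — 2 statements merged into one kernel-verified Lean document; each statement's English description precedes it below -/
import Mathlib

section
/- The curve γ(t) = (a₁,…,a_{n−1}, x_n + 3^{−ρ} t), where a₁,…,a_{n−1} ∈ ℤ and ρ is the number of even aᵢ, is a unit-speed geodesic of the metric g = h²δ: it satisfies the geodesic equation γ̈ᵏ + Γᵏ_{ij}(γ) γ̇ⁱ γ̇ʲ = 0 and g(γ̇, γ̇) = 1. -/
open Real Finset

/-- Partial derivative of `f` in the `i`-th coordinate direction. -/
noncomputable def pd {n : ℕ} (i : Fin n) (f : (Fin n → ℝ) → ℝ) (x : Fin n → ℝ) : ℝ :=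
  fderiv ℝ f x (Pi.single i 1)

/-- The conformal factor `h(x) = ∏_{i=1}^{n-1} (2 + cos (π xᵢ))`. -/
noncomputable def hC (n : ℕ) (x : Fin n → ℝ) : ℝ :=
  ∏ i : Fin (n - 1), (2 + Real.cos (Real.pi * x (Fin.castLE (Nat.sub_le n 1) i)))

/-- The conformally flat metric `g_{ij} = h² δ_{ij}`. -/
noncomputable def gM {n : ℕ} (h : (Fin n → ℝ) → ℝ) (x : Fin n → ℝ) (i j : Fin n) : ℝ :=
  if i = j then (h x) ^ 2 else 0

/-- Christoffel symbols `Γᵏ_{ij} = ½ Σₗ g^{kl} (∂ᵢ g_{jl} + ∂ⱼ g_{li} − ∂ₗ g_{ij})`,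
with inverse metric `g^{kl} = h⁻² δ_{kl}`. -/
noncomputable def Γconf {n : ℕ} (h : (Fin n → ℝ) → ℝ) (k i j : Fin n) (x : Fin n → ℝ) : ℝ :=
  (1 / 2) * ∑ l, (if k = l then ((h x) ^ 2)⁻¹ else 0) *
    (pd i (fun y => gM h y j l) x + pd j (fun y => gM h y l i) x - pd l (fun y => gM h y i j) x)

/-- Components of the curvature tensor: `R(∂ᵢ,∂ⱼ)∂ₖ = (Rcurv h l k i j) ∂ₗ`. -/
noncomputable def Rcurv {n : ℕ} (h : (Fin n → ℝ) → ℝ) (l k i j : Fin n) (x : Fin n → ℝ) : ℝ :=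
  pd i (fun y => Γconf h l j k y) x - pd j (fun y => Γconf h l i k y) x
    + ∑ m, Γconf h m j k x * Γconf h l i m x - ∑ m, Γconf h m i k x * Γconf h l j m x

/-- Jacobi operator components `(R̄_{∂_N})_{ij} = ⟨R̄(∂ᵢ,∂_N)∂_N, ∂ⱼ⟩`. -/
noncomputable def Jac {n : ℕ} (h : (Fin n → ℝ) → ℝ) (N i j : Fin n) (x : Fin n → ℝ) : ℝ :=
  ∑ l, gM h x l j * Rcurv h l N i N x

/-! At a point all of whose first `n - 1` coordinates are integers, every factor `2 + cos (π xᵢ)` of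
`h` is critical and equals `3` or `1` according to the parity of `xᵢ`. Hence `h` is critical with
value `3 ^ ρ` all along the vertical line through such a point, so the Christoffel symbols vanish
there and the vertical line traversed at speed `3 ^ (-ρ)` is a unit-speed geodesic. -/

lemma pd_eq_zero_of_hasFDerivAt_zero {n : ℕ} {f : (Fin n → ℝ) → ℝ} {x : Fin n → ℝ}
    (hf : HasFDerivAt f (0 : (Fin n → ℝ) →L[ℝ] ℝ) x) (i : Fin n) : pd i f x = 0 := by
  simp [pd, hf.fderiv]

lemma Γconf_eq_zero_of_hasFDerivAt_zero {n : ℕ} {h : (Fin n → ℝ) → ℝ} {x : Fin n → ℝ}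
    (hh : HasFDerivAt h (0 : (Fin n → ℝ) →L[ℝ] ℝ) x) (k i j : Fin n) :
    Γconf h k i j x = 0 := by
  have hgM : ∀ a b l : Fin n, pd l (fun y => gM h y a b) x = 0 := by
    intro a b l
    by_cases hab : a = b
    · have hsq : HasFDerivAt (fun y => h y ^ 2) (0 : (Fin n → ℝ) →L[ℝ] ℝ) x := by
        simpa using hh.pow 2
      simpa [gM, hab] using pd_eq_zero_of_hasFDerivAt_zero hsq l
    · simp [pd, gM, hab]
  simp [Γconf, hgM]

lemma hasDerivAt_two_add_cos_pi_mul_intCast (m : ℤ) :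
    HasDerivAt (fun u : ℝ => 2 + cos (π * u)) 0 m := by
  have hsin : sin (π * m) = 0 := by rw [mul_comm]; exact sin_int_mul_pi m
  simpa [hsin] using (((hasDerivAt_id (m : ℝ)).const_mul π).cos).const_add 2

lemma two_add_cos_pi_mul_intCast (m : ℤ) : 2 + cos (π * m) = if Even m then 3 else 1 := by
  have hcos : cos (π * m) = (-1) ^ m := by
    rw [mul_comm]; simpa using cos_int_mul_pi_sub 0 m
  rcases Int.even_or_odd m with hm | hm
  · rw [hcos, hm.neg_one_zpow, if_pos hm]; norm_num
  · rw [hcos, hm.neg_one_zpow, if_neg (Int.not_even_iff_odd.mpr hm)]; norm_num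

section IntegerPoints

variable {n : ℕ} {x : Fin n → ℝ} {a : Fin (n - 1) → ℤ}

lemma hasFDerivAt_hC_zero (hx : ∀ i, x (Fin.castLE (Nat.sub_le n 1) i) = a i) :
    HasFDerivAt (hC n) (0 : (Fin n → ℝ) →L[ℝ] ℝ) x := by
  have hfactor : ∀ i : Fin (n - 1), HasFDerivAt
      (fun y : Fin n → ℝ => 2 + cos (π * y (Fin.castLE (Nat.sub_le n 1) i)))
      (0 : (Fin n → ℝ) →L[ℝ] ℝ) x := by
    intro i
    have hcos := hasDerivAt_two_add_cos_pi_mul_intCast (a i)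
    rw [← hx i] at hcos
    have hproj : HasFDerivAt (fun y : Fin n → ℝ => y (Fin.castLE (Nat.sub_le n 1) i))
        (ContinuousLinearMap.proj (R := ℝ) (Fin.castLE (Nat.sub_le n 1) i)) x :=
      hasFDerivAt_apply _ x
    exact (hcos.comp_hasFDerivAt x hproj).congr_fderiv (zero_smul ℝ _)
  unfold hC
  simpa using HasFDerivAt.finsetProd (u := univ) fun i _ => hfactor i

lemma hC_eq_three_pow (hx : ∀ i, x (Fin.castLE (Nat.sub_le n 1) i) = a i) :
    hC n x = 3 ^ (univ.filter fun i => Even (a i)).card := by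
  simp only [hC, hx, two_add_cos_pi_mul_intCast]
  rw [prod_ite, prod_const, prod_const_one, mul_one]

end IntegerPoints

section AffineCurves

variable {n : ℕ} (p v : Fin n → ℝ)

lemma deriv_affine_coord (i : Fin n) (t : ℝ) : deriv (fun u => p i + u * v i) t = v i := by
  simp

lemma geodesic_equation_affine_of_Γconf_eq_zero (h : (Fin n → ℝ) → ℝ)
    (hΓ : ∀ t k i j, Γconf h k i j (fun l => p l + t * v l) = 0) (k : Fin n) (t : ℝ) :
    deriv (fun u => deriv (fun w => p k + w * v k) u) t
      + ∑ i, ∑ j, Γconf h k i j (fun l => p l + t * v l) *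
          deriv (fun w => p i + w * v i) t * deriv (fun w => p j + w * v j) t = 0 := by
  simp [hΓ]

end AffineCurves

theorem stmt_6 (n : ℕ) (hn : 2 ≤ n) (a : Fin (n - 1) → ℤ) (s : ℝ) :
    let ρ : ℕ := (Finset.univ.filter fun i => Even (a i)).card
    let γ : ℝ → Fin n → ℝ := fun t j =>
      if hj : (j : ℕ) < n - 1 then (a ⟨j, hj⟩ : ℝ) else s + ((3 : ℝ) ^ ρ)⁻¹ * t
    (∀ (k : Fin n) (t : ℝ),
        deriv (fun u => deriv (fun v => γ v k) u) t
          + ∑ i, ∑ j, Γconf (hC n) k i j (γ t) *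
              deriv (fun v => γ v i) t * deriv (fun v => γ v j) t = 0) ∧
    (∀ t : ℝ, (hC n (γ t)) ^ 2 * ∑ i, (deriv (fun v => γ v i) t) ^ 2 = 1) := by
  intro ρ γ
  let last : Fin n := ⟨n - 1, by omega⟩
  let p : Fin n → ℝ := fun j => if hj : (j : ℕ) < n - 1 then (a ⟨j, hj⟩ : ℝ) else s
  let v : Fin n → ℝ := Pi.single last ((3 : ℝ) ^ ρ)⁻¹
  have hγ : γ = fun t l => p l + t * v l := by
    funext t l
    by_cases hl : (l : ℕ) < n - 1
    · have : l ≠ last := fun h => by simp [h, last] at hl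
      simp [γ, p, v, hl, this]
    · obtain rfl : l = last := Fin.ext (by have := l.2; simp [last]; omega)
      simp [γ, p, v, hl, mul_comm]
  have hcoord : ∀ t i, γ t (Fin.castLE (Nat.sub_le n 1) i) = a i := fun t i => by simp [γ]
  have hΓ : ∀ t k i j, Γconf (hC n) k i j (γ t) = 0 := fun t =>
    Γconf_eq_zero_of_hasFDerivAt_zero (hasFDerivAt_hC_zero (hcoord t))
  have hh : ∀ t, hC n (γ t) = 3 ^ ρ := fun t => hC_eq_three_pow (hcoord t)
  rw [hγ] at hΓ hh ⊢
  refine ⟨geodesic_equation_affine_of_Γconf_eq_zero p v (hC n) hΓ, fun t => ?_⟩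
  have hspeed : ∑ i, v i ^ 2 = (((3 : ℝ) ^ ρ)⁻¹) ^ 2 := by
    rw [Fintype.sum_eq_single last fun i hi => by simp [v, hi]]
    simp [v]
  simp only [deriv_affine_coord, hspeed, hh]
  field_simp
end

section
/- Along the vertical geodesic γ_a(t) = (a₁,…,a_{n−1}, s + 3^{−ρ}t) with all aᵢ ∈ ℤ and ρ even entries among them, the Ricci curvature of g = h²δ in the direction of the unit tangent γ̇_a satisfies R̄ic(γ̇_a, γ̇_a) = π²(1 − n + (4/3)ρ). -/
/-!
For `g = h²δ` the Christoffel symbols are `Γᵏᵢⱼ = (δⱼₖ ∂ᵢh + δₖᵢ ∂ⱼh − δᵢⱼ ∂ₖh) / h`. On `γ_a` every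
`sin (π aᵢ)` vanishes, so `∇h = 0` and all `Γ` vanish there; the quadratic terms of `R^i_{NiN}` drop
out and it reduces to `∂ᵢΓⁱ_{NN} − ∂_N Γⁱ_{iN}`. As `h` does not depend on `x_N`, `Γⁱ_{iN} = ∂_N h / h`
is zero, while `Γⁱ_{NN} = −∂ᵢh / h = π sin (π xᵢ) / (2 + cos (π xᵢ))` has `xᵢ`-derivative
`π² (2 cos (π xᵢ) + 1) / (2 + cos (π xᵢ))²`, which is `π²/3` at even and `−π²` at odd integers.
Summing over `i` gives `ρ π²/3 − (n − 1 − ρ) π²`.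
-/

open Real Finset

section ConformalMetric

variable {n : ℕ} {h : (Fin n → ℝ) → ℝ} {x : Fin n → ℝ}

lemma pd_comp_eval {φ : ℝ → ℝ} {i : Fin n} (hφ : DifferentiableAt ℝ φ (x i)) (m : Fin n) :
    pd m (fun y => φ (y i)) x = if i = m then deriv φ (x i) else 0 := by
  have hφi := hφ.hasDerivAt.comp_hasFDerivAt x (hasFDerivAt_apply (𝕜 := ℝ) i x)
  rw [pd, show (fun y : Fin n → ℝ => φ (y i)) = φ ∘ fun f => f i from rfl, hφi.fderiv]
  simp [Pi.single_apply]

lemma pd_pow_two (hd : DifferentiableAt ℝ h x) (m : Fin n) :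
    pd m (fun y => h y ^ 2) x = 2 * h x * pd m h x := by
  simp [pd, fderiv_fun_pow 2 hd, mul_assoc]

lemma pd_gM (hd : DifferentiableAt ℝ h x) (m i j : Fin n) :
    pd m (fun y => gM h y i j) x = if i = j then 2 * h x * pd m h x else 0 := by
  by_cases hij : i = j
  · simpa [gM, hij] using pd_pow_two hd m
  · simp [gM, hij, pd]

lemma Γconf_eq (hd : DifferentiableAt ℝ h x) (hx : h x ≠ 0) (k i j : Fin n) :
    Γconf h k i j x = ((if j = k then pd i h x else 0) + (if k = i then pd j h x else 0)
      - (if i = j then pd k h x else 0)) / h x := by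
  simp only [Γconf, pd_gM hd, ite_mul, zero_mul, sum_ite_eq, mem_univ, if_true]
  split_ifs <;> field_simp <;> ring

lemma Γconf_eq_zero_of_pd_eq_zero (hd : DifferentiableAt ℝ h x) (hcrit : ∀ m, pd m h x = 0)
    (k i j : Fin n) : Γconf h k i j x = 0 := by
  simp [Γconf, pd_gM hd, hcrit]

lemma Γconf_eq_neg_pd_div (hd : DifferentiableAt ℝ h x) (hx : h x ≠ 0) {i N : Fin n}
    (hiN : i ≠ N) : Γconf h i N N x = -pd i h x / h x := by
  simp [Γconf_eq hd hx, hiN, Ne.symm hiN, neg_div]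

lemma Γconf_eq_pd_div (hd : DifferentiableAt ℝ h x) (hx : h x ≠ 0) {i N : Fin n}
    (hiN : i ≠ N) : Γconf h i i N x = pd N h x / h x := by
  simp [Γconf_eq hd hx, hiN, Ne.symm hiN]

lemma Jac_diag (N i : Fin n) : Jac h N i i x = h x ^ 2 * Rcurv h i N i N x := by
  simp [Jac, gM]

lemma Rcurv_eq_of_pd_eq_zero (hd : DifferentiableAt ℝ h x) (hcrit : ∀ m, pd m h x = 0)
    (i N : Fin n) :
    Rcurv h i N i N x = pd i (Γconf h i N N) x - pd N (Γconf h i i N) x := by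
  simp [Rcurv, Γconf_eq_zero_of_pd_eq_zero hd hcrit]

end ConformalMetric

noncomputable def cosFactor (u : ℝ) : ℝ := 2 + cos (π * u)

lemma cosFactor_pos (u : ℝ) : 0 < cosFactor u := by
  linarith [neg_one_le_cos (π * u), show cosFactor u = 2 + cos (π * u) from rfl]

lemma hasDerivAt_cosFactor (u : ℝ) : HasDerivAt cosFactor (-(π * sin (π * u))) u :=
  (((hasDerivAt_id u).const_mul π).cos.const_add 2).congr_deriv (by simp [mul_comm])

lemma hasDerivAt_sin_div_cosFactor (u : ℝ) :
    HasDerivAt (fun v => π * sin (π * v) / cosFactor v)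
      (π ^ 2 * (2 * cos (π * u) + 1) / cosFactor u ^ 2) u := by
  refine ((((hasDerivAt_id u).const_mul π).sin.const_mul π).div (hasDerivAt_cosFactor u)
    (cosFactor_pos u).ne').congr_deriv ?_
  simp only [cosFactor, id, mul_one]
  congr 1
  linear_combination π ^ 2 * sin_sq_add_cos_sq (π * u)

lemma deriv_sin_div_cosFactor_intCast (z : ℤ) :
    deriv (fun v => π * sin (π * v) / cosFactor v) z = if Even z then π ^ 2 / 3 else -π ^ 2 := by
  rw [(hasDerivAt_sin_div_cosFactor z).deriv, cosFactor, mul_comm π, cos_int_mul_pi]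
  rcases z.even_or_odd with hz | hz
  · rw [hz.neg_one_zpow, if_pos hz]; ring
  · rw [hz.neg_one_zpow, if_neg (Int.not_even_iff_odd.mpr hz)]; ring

-- `ι` embeds the horizontal indices; the remaining index `n - 1` is the vertical direction.
local notation "ι" => Fin.castLE (Nat.sub_le _ 1)

section ConformalFactor

variable {n : ℕ}

lemma castLE_ne_of_sub_one_le {N : Fin n} (hN : n - 1 ≤ N) (i : Fin (n - 1)) : ι i ≠ N :=
  fun h => by have := congrArg Fin.val h; simp only [Fin.val_castLE] at this; omega

lemma image_castLE_eq_erase {N : Fin n} (hN : n - 1 ≤ N) : univ.image ι = univ.erase N := by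
  ext j
  simp only [mem_image, mem_univ, true_and, mem_erase, and_true]
  constructor
  · rintro ⟨i, rfl⟩
    exact castLE_ne_of_sub_one_le hN i
  · intro hj
    exact ⟨⟨j, by have := Fin.val_ne_of_ne hj; omega⟩, rfl⟩

lemma hC_pos (x : Fin n → ℝ) : 0 < hC n x :=
  prod_pos fun i _ => cosFactor_pos (x (ι i))

lemma hC_eq_mul_prod_erase (x : Fin n → ℝ) (i : Fin (n - 1)) :
    hC n x = cosFactor (x (ι i)) * ∏ j ∈ univ.erase i, cosFactor (x (ι j)) :=
  (mul_prod_erase univ (fun j => cosFactor (x (ι j))) (mem_univ i)).symm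

lemma differentiable_hC : Differentiable ℝ (hC n) := by
  unfold hC; fun_prop

lemma pd_hC (m : Fin n) (x : Fin n → ℝ) :
    pd m (hC n) x = ∑ i, (∏ j ∈ univ.erase i, cosFactor (x (ι j))) *
      if ι i = m then -(π * sin (π * x (ι i))) else 0 := by
  have hd : ∀ i, DifferentiableAt ℝ cosFactor (x (ι i)) := fun i =>
    (hasDerivAt_cosFactor _).differentiableAt
  have hdi : ∀ i, DifferentiableAt ℝ (fun y : Fin n → ℝ => cosFactor (y (ι i))) x := fun i =>
    DifferentiableAt.comp (g := cosFactor) (f := fun y : Fin n → ℝ => y (ι i)) x (hd i)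
      (differentiableAt_apply (ι i) x)
  rw [pd, show hC n = fun y => ∏ i, cosFactor (y (ι i)) from rfl,
    fderiv_finsetProd fun i _ => hdi i]
  simp only [_root_.sum_apply, FunLike.coe_smul, Pi.smul_apply, smul_eq_mul]
  refine sum_congr rfl fun i _ => ?_
  rw [← pd, pd_comp_eval (hd i), (hasDerivAt_cosFactor _).deriv]

lemma pd_hC_castLE (i : Fin (n - 1)) (x : Fin n → ℝ) :
    pd (ι i) (hC n) x = -(π * sin (π * x (ι i))) * ∏ j ∈ univ.erase i, cosFactor (x (ι j)) := by
  rw [pd_hC, sum_eq_single i (fun j _ hji => by simp [Fin.castLE_injective _ |>.ne hji])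
    (by simp), if_pos rfl, mul_comm]

lemma pd_hC_of_sub_one_le {m : Fin n} (hm : n - 1 ≤ m) (x : Fin n → ℝ) : pd m (hC n) x = 0 := by
  refine (pd_hC m x).trans (sum_eq_zero fun i _ => ?_)
  simp [castLE_ne_of_sub_one_le hm i]

lemma pd_hC_of_intCast {x : Fin n → ℝ} {z : Fin (n - 1) → ℤ} (hx : ∀ i, x (ι i) = z i)
    (m : Fin n) : pd m (hC n) x = 0 := by
  refine (pd_hC m x).trans (sum_eq_zero fun i _ => ?_)
  simp [hx, mul_comm π, sin_int_mul_pi]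

lemma Γconf_hC_castLE_of_sub_one_le {N : Fin n} (hN : n - 1 ≤ N) (i : Fin (n - 1))
    (x : Fin n → ℝ) :
    Γconf (hC n) (ι i) N N x = π * sin (π * x (ι i)) / cosFactor (x (ι i)) := by
  have hP : ∏ j ∈ univ.erase i, cosFactor (x (ι j)) ≠ 0 :=
    prod_ne_zero_iff.mpr fun j _ => (cosFactor_pos _).ne'
  rw [Γconf_eq_neg_pd_div differentiable_hC.differentiableAt (hC_pos x).ne'
    (castLE_ne_of_sub_one_le hN i),
    pd_hC_castLE, hC_eq_mul_prod_erase x i, neg_mul, neg_neg, mul_div_mul_right _ _ hP]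

lemma Rcurv_hC_castLE_of_intCast {N : Fin n} (hN : n - 1 ≤ N) {x : Fin n → ℝ}
    {z : Fin (n - 1) → ℤ} (hx : ∀ i, x (ι i) = z i) (i : Fin (n - 1)) :
    Rcurv (hC n) (ι i) N (ι i) N x = if Even (z i) then π ^ 2 / 3 else -π ^ 2 := by
  have hΓNN : Γconf (hC n) (ι i) N N = fun y => π * sin (π * y (ι i)) / cosFactor (y (ι i)) :=
    funext (Γconf_hC_castLE_of_sub_one_le hN i)
  have hΓiN : Γconf (hC n) (ι i) (ι i) N = fun _ => 0 := funext fun y => by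
    rw [Γconf_eq_pd_div differentiable_hC.differentiableAt (hC_pos y).ne'
      (castLE_ne_of_sub_one_le hN i), pd_hC_of_sub_one_le hN, zero_div]
  rw [Rcurv_eq_of_pd_eq_zero differentiable_hC.differentiableAt (pd_hC_of_intCast hx), hΓNN, hΓiN,
    pd_comp_eval (hasDerivAt_sin_div_cosFactor _).differentiableAt, if_pos rfl, hx,
    deriv_sin_div_cosFactor_intCast]
  simp [pd]

end ConformalFactor

theorem stmt_9 (n : ℕ) (hn : 2 ≤ n) (a : Fin (n - 1) → ℤ) (s t : ℝ) :
    let N : Fin n := ⟨n - 1, by omega⟩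
    let ρ : ℕ := (Finset.univ.filter fun i => Even (a i)).card
    let γt : Fin n → ℝ := fun j =>
      if hj : (j : ℕ) < n - 1 then (a ⟨j, hj⟩ : ℝ) else s + ((3 : ℝ) ^ ρ)⁻¹ * t
    ∑ i ∈ Finset.univ.erase N, ((hC n γt) ^ 2)⁻¹ * Jac (hC n) N i i γt
      = π ^ 2 * (1 - (n : ℝ) + (4 / 3) * (ρ : ℝ)) := by
  intro N ρ γt
  have hN : n - 1 ≤ (N : ℕ) := le_rfl
  have hγ : ∀ i, γt (ι i) = a i := fun i => dif_pos i.isLt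
  rw [← image_castLE_eq_erase hN, sum_image fun _ _ _ _ h => Fin.castLE_injective _ h]
  calc ∑ i, (hC n γt ^ 2)⁻¹ * Jac (hC n) N (ι i) (ι i) γt
      = ∑ i, (-π ^ 2 + 4 * π ^ 2 / 3 * if Even (a i) then 1 else 0) := sum_congr rfl fun i _ => by
        rw [Jac_diag, inv_mul_cancel_left₀ (pow_ne_zero 2 (hC_pos γt).ne'),
          Rcurv_hC_castLE_of_intCast hN hγ]
        split_ifs <;> ring
    _ = π ^ 2 * (1 - n + 4 / 3 * ρ) := by
      rw [sum_add_distrib, ← mul_sum, sum_boole, sum_const, card_univ, Fintype.card_fin,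
        nsmul_eq_mul, Nat.cast_sub (by omega : 1 ≤ n)]
      push_cast
      ring
end
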